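/- For every natural number N, every real Δ, and every real x > 0, one has P̃^{(N+1,1/2)}_{N+1}(x) = 0 if and only if P^{(N,1/2)}_N(x) = 0; that is, the positive roots of P^{(N,1/2)}_N and of P̃^{(N+1,1/2)}_{N+1} coincide. -/

import Mathlib

/-- The constraint polynomials `P^{(N,ε)}_k(x)` of the asymmetric quantum Rabi model,
defined by the recursion `P₀ = 1`, `P₁ = x + Δ² − 1 − 2ε`,
`P_k = (k x + Δ² − k² − 2kε) P_{k−1} − k(k−1)(N−k+1) x P_{k−2}`. -/
noncomputable def constraintP (N : ℕ) (ε Δ x : ℝ) : ℕ → ℝ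
  | 0 => 1
  | 1 => x + Δ ^ 2 - 1 - 2 * ε
  | (k + 2) =>
      (((k : ℝ) + 2) * x + Δ ^ 2 - ((k : ℝ) + 2) ^ 2 - 2 * ((k : ℝ) + 2) * ε) *
          constraintP N ε Δ x (k + 1) -
        ((k : ℝ) + 2) * ((k : ℝ) + 1) * ((N : ℝ) - ((k : ℝ) + 2) + 1) * x *
          constraintP N ε Δ x k

/-- The companion constraint polynomials `P̃^{(N,ε)}_k(x)`, i.e. the same recursion with
`ε` replaced by `−ε`. -/
noncomputable def constraintPt (N : ℕ) (ε Δ x : ℝ) : ℕ → ℝ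
  | 0 => 1
  | 1 => x + Δ ^ 2 - 1 + 2 * ε
  | (k + 2) =>
      (((k : ℝ) + 2) * x + Δ ^ 2 - ((k : ℝ) + 2) ^ 2 + 2 * ((k : ℝ) + 2) * ε) *
          constraintPt N ε Δ x (k + 1) -
        ((k : ℝ) + 2) * ((k : ℝ) + 1) * ((N : ℝ) - ((k : ℝ) + 2) + 1) * x *
          constraintPt N ε Δ x k

/-!
With `ε = 1/2`, each companion polynomial `P̃^{(N+1)}_{k+2}` is a combination of two
consecutive polynomials `P^{(N)}_{k+1}, P^{(N)}_k`, with a second coefficient proportional to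
`N - k - 1`. At `k + 2 = N + 1` that coefficient vanishes, leaving the factorisation
`P̃^{(N+1)}_{N+1}(x) = ((N+1)x + Δ²) P^{(N)}_N(x)`, whose first factor is positive for `x > 0`.
-/

section Recursion

variable (N : ℕ) (ε Δ x : ℝ)

theorem constraintP_add_two (k : ℕ) :
    constraintP N ε Δ x (k + 2) =
      (((k : ℝ) + 2) * x + Δ ^ 2 - ((k : ℝ) + 2) ^ 2 - 2 * ((k : ℝ) + 2) * ε) *
          constraintP N ε Δ x (k + 1) -
        ((k : ℝ) + 2) * ((k : ℝ) + 1) * ((N : ℝ) - ((k : ℝ) + 2) + 1) * x *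
          constraintP N ε Δ x k := rfl

theorem constraintPt_add_two (k : ℕ) :
    constraintPt N ε Δ x (k + 2) =
      (((k : ℝ) + 2) * x + Δ ^ 2 - ((k : ℝ) + 2) ^ 2 + 2 * ((k : ℝ) + 2) * ε) *
          constraintPt N ε Δ x (k + 1) -
        ((k : ℝ) + 2) * ((k : ℝ) + 1) * ((N : ℝ) - ((k : ℝ) + 2) + 1) * x *
          constraintPt N ε Δ x k := rfl

end Recursion

theorem constraintPt_succ_half_add_two (N : ℕ) (Δ x : ℝ) (k : ℕ) :
    constraintPt (N + 1) (1 / 2) Δ x (k + 2) =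
      (((k : ℝ) + 2) * x + Δ ^ 2) * constraintP N (1 / 2) Δ x (k + 1) -
        ((k : ℝ) + 1) * ((k : ℝ) + 2) * ((N : ℝ) - k - 1) * x * constraintP N (1 / 2) Δ x k := by
  induction k using Nat.twoStepInduction with
  | zero | one =>
    simp only [constraintPt, constraintP]
    push_cast
    ring
  | more n ih₀ ih₁ =>
    rw [constraintPt_add_two, ih₁, ih₀, constraintP_add_two N _ _ _ (n + 1),
      constraintP_add_two N _ _ _ n]
    push_cast
    ring

theorem constraintPt_succ_half_succ_self (N : ℕ) (Δ x : ℝ) :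
    constraintPt (N + 1) (1 / 2) Δ x (N + 1) =
      (((N : ℝ) + 1) * x + Δ ^ 2) * constraintP N (1 / 2) Δ x N := by
  cases N with
  | zero =>
    simp only [constraintPt, constraintP]
    ring
  | succ n =>
    rw [constraintPt_succ_half_add_two]
    push_cast
    ring

/-- The positive roots of `P^{(N,1/2)}_N` and `P̃^{(N+1,1/2)}_{N+1}` coincide. -/
theorem constraintPt_pos_roots_coincide (N : ℕ) (Δ : ℝ) (x : ℝ) (hx : 0 < x) :
    constraintPt (N + 1) (1 / 2) Δ x (N + 1) = 0 ↔ constraintP N (1 / 2) Δ x N = 0 := by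
  have hfactor : ((N : ℝ) + 1) * x + Δ ^ 2 ≠ 0 := by positivity
  rw [constraintPt_succ_half_succ_self, mul_eq_zero, or_iff_right hfactor]
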